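/- arXiv:1912.04996 — 2 statements merged into one kernel-verified Lean document; each statement's English description precedes it below -/
import Mathlib

section
/- If j₁ = j₂ = j₃ = j with j > 0, then the system b₁(b₂² + b₃²) = j₁, b₂(b₁² + b₃²) = j₂, b₃(b₁² + b₂²) = j₃ has exactly one real solution, namely b₁ = b₂ = b₃ = (j/2)^{1/3} (real cube root). -/
/-!
Each equation has the form `bᵢ (S - bᵢ²) = j` with `S = b₁² + b₂² + b₃²`, so all three `bᵢ`
are positive, and subtracting two equations gives `(b₁ - b₂)(b₃² - b₁b₂) = 0`. Two distinct
unknowns thus force the third to be their geometric mean; since this cannot happen for two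
different pairs at once, all `bᵢ` coincide, and then `2b³ = j`.
-/

/-- The real cube root. -/
noncomputable def cbrt (x : ℝ) : ℝ :=
  if 0 ≤ x then x ^ ((1 : ℝ) / 3) else -((-x) ^ ((1 : ℝ) / 3))

lemma cbrt_pow_three (x : ℝ) : cbrt x ^ 3 = x := by
  have key {y : ℝ} (hy : 0 ≤ y) : (y ^ ((1 : ℝ) / 3)) ^ 3 = y := by
    simpa using Real.rpow_inv_natCast_pow (n := 3) hy (by norm_num)
  unfold cbrt
  split_ifs with hx
  · exact key hx
  · rw [neg_pow, key (by linarith)]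
    ring

lemma cbrt_eq_iff {x b : ℝ} : cbrt x = b ↔ b ^ 3 = x := by
  rw [← (Odd.pow_inj (n := 3) (by decide)), cbrt_pow_three, eq_comm]

lemma eq_of_sq_eq_mul_of_sq_eq_mul {R : Type*} [CommRing R] [LinearOrder R]
    [IsStrictOrderedRing R] {a b c : R} (hb : b ≠ 0) (h₁ : c ^ 2 = a * b)
    (h₂ : b ^ 2 = a * c) : a = b ∧ b = c := by
  have hbc : b = c :=
    (Odd.pow_inj (n := 3) (by decide)).1 (by linear_combination b * h₂ - c * h₁)
  subst hbc
  exact ⟨mul_right_cancel₀ hb (by linear_combination -h₂), rfl⟩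

lemma eq_of_cubic_system {j b₁ b₂ b₃ : ℝ} (hj : 0 < j)
    (e₁ : b₁ * (b₂ ^ 2 + b₃ ^ 2) = j) (e₂ : b₂ * (b₁ ^ 2 + b₃ ^ 2) = j)
    (e₃ : b₃ * (b₁ ^ 2 + b₂ ^ 2) = j) : b₁ = b₂ ∧ b₁ = b₃ := by
  have hb₁ : b₁ ≠ 0 := (pos_of_mul_pos_left (e₁ ▸ hj) (by positivity)).ne'
  have hb₂ : b₂ ≠ 0 := (pos_of_mul_pos_left (e₂ ▸ hj) (by positivity)).ne'
  have d₁₂ : (b₁ - b₂) * (b₃ ^ 2 - b₁ * b₂) = 0 := by linear_combination e₁ - e₂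
  have d₁₃ : (b₁ - b₃) * (b₂ ^ 2 - b₁ * b₃) = 0 := by linear_combination e₁ - e₃
  rcases mul_eq_zero.1 d₁₂ with h₁₂ | h₃ <;> rcases mul_eq_zero.1 d₁₃ with h₁₃ | h₂
  · exact ⟨sub_eq_zero.1 h₁₂, sub_eq_zero.1 h₁₃⟩
  · obtain rfl := sub_eq_zero.1 h₁₂
    exact ⟨rfl, mul_left_cancel₀ hb₁ (by linear_combination h₂)⟩
  · obtain rfl := sub_eq_zero.1 h₁₃
    exact ⟨mul_left_cancel₀ hb₁ (by linear_combination h₃), rfl⟩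
  · obtain ⟨h₁₂, h₂₃⟩ :=
      eq_of_sq_eq_mul_of_sq_eq_mul hb₂ (sub_eq_zero.1 h₃) (sub_eq_zero.1 h₂)
    exact ⟨h₁₂, h₁₂.trans h₂₃⟩

/-- If `j₁ = j₂ = j₃ = j > 0` then the system `b₁(b₂² + b₃²) = j₁`,
`b₂(b₁² + b₃²) = j₂`, `b₃(b₁² + b₂²) = j₃` has exactly one real solution, namely
`b₁ = b₂ = b₃ = (j/2)^{1/3}`. -/
theorem euclidean_cubic_equal_currents (j j₁ j₂ j₃ : ℝ) (hj : 0 < j)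
    (h₁ : j₁ = j) (h₂ : j₂ = j) (h₃ : j₃ = j) :
    ∀ b₁ b₂ b₃ : ℝ,
      (b₁ * (b₂ ^ 2 + b₃ ^ 2) = j₁ ∧ b₂ * (b₁ ^ 2 + b₃ ^ 2) = j₂ ∧
        b₃ * (b₁ ^ 2 + b₂ ^ 2) = j₃) ↔
      (b₁ = cbrt (j / 2) ∧ b₂ = cbrt (j / 2) ∧ b₃ = cbrt (j / 2)) := by
  subst j₁ j₂ j₃
  intro b₁ b₂ b₃
  constructor
  · rintro ⟨e₁, e₂, e₃⟩
    obtain ⟨rfl, rfl⟩ := eq_of_cubic_system hj e₁ e₂ e₃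
    have hcube : b₁ ^ 3 = j / 2 := by linear_combination e₁ / 2
    obtain rfl := (cbrt_eq_iff.2 hcube).symm
    exact ⟨rfl, rfl, rfl⟩
  · rintro ⟨rfl, rfl, rfl⟩
    have hcube := cbrt_eq_iff.1 (rfl : cbrt (j / 2) = _)
    refine ⟨?_, ?_, ?_⟩ <;> linear_combination 2 * hcube
end

section
/- If j₁, j₂, j₃ > 0 are pairwise distinct, then the cubic equation j₁ j₂ t³ − (j₁² + j₂² + j₃²) t² + 4 j₃² = 0 has a real root t₀ with t₀ > j₂/j₁ + j₁/j₂ (in particular t₀ > 2), and the system b₁(b₂² + b₃²) = j₁, b₂(b₁² + b₃²) = j₂, b₃(b₁² + b₂²) = j₃ has exactly two real solutions, given by b₁± = (j₃/(t₀ y± z±))^{1/3}, b₂± = y± b₁±, b₃± = z± b₁±, where y± = (t₀ ± √(t₀² − 4))/2 and z± = √( y± (j₁ − j₂ y±)/(j₂ − j₁ y±) ). Moreover y₊ y₋ = 1, z₊ z₋ = 1, and b₁₊ b₁₋ = b₂₊ b₂₋ = b₃₊ b₃₋ = (j₃/t₀)^{2/3}. -/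
set_option maxHeartbeats 1000000

lemma cbrt_of_nonneg {x : ℝ} (hx : 0 ≤ x) : cbrt x = x ^ ((1:ℝ)/3) := if_pos hx

lemma cbrt_pos' {x : ℝ} (hx : 0 < x) : 0 < cbrt x := by
  rw [cbrt_of_nonneg hx.le]; exact Real.rpow_pos_of_pos hx _

lemma cbrt_cube {x : ℝ} (hx : 0 ≤ x) : (cbrt x)^3 = x := by
  rw [cbrt_of_nonneg hx, ← Real.rpow_natCast (x ^ ((1:ℝ)/3)) 3, ← Real.rpow_mul hx]
  norm_num

lemma cube_inj {a b : ℝ} (ha : 0 < a) (hb : 0 < b) (h : a^3 = b^3) : a = b := by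
  nlinarith [sq_nonneg (a - b), sq_nonneg (a + b), mul_pos ha hb]

lemma pos_factor {a b c : ℝ} (h : a * b = c) (hb : 0 < b) (hc : 0 < c) : 0 < a := by
  rw [← h] at hc
  rcases mul_pos_iff.mp hc with ⟨ha, _⟩ | ⟨_, hb'⟩
  · exact ha
  · linarith

lemma sq_inj {a b : ℝ} (ha : 0 < a) (hb : 0 < b) (h : a^2 = b^2) : a = b := by
  nlinarith


/-- If `j₁, j₂, j₃ > 0` are pairwise distinct, then the cubic
`j₁ j₂ t³ − (j₁² + j₂² + j₃²) t² + 4 j₃² = 0` has a root `t₀ > j₂/j₁ + j₁/j₂ > 2`, and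
the system `b₁(b₂² + b₃²) = j₁`, `b₂(b₁² + b₃²) = j₂`, `b₃(b₁² + b₂²) = j₃` has exactly
the two solutions `b₁± = (j₃/(t₀ y± z±))^{1/3}`, `b₂± = y± b₁±`, `b₃± = z± b₁±`, where
`y± = (t₀ ± √(t₀² − 4))/2`, `z± = √(y± (j₁ − j₂ y±)/(j₂ − j₁ y±))`; moreover
`y₊ y₋ = 1`, `z₊ z₋ = 1` and `b₁₊ b₁₋ = b₂₊ b₂₋ = b₃₊ b₃₋ = (j₃/t₀)^{2/3}`. -/
theorem euclidean_cubic_all_distinct_currents (j₁ j₂ j₃ : ℝ)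
    (h1 : 0 < j₁) (h2 : 0 < j₂) (h3 : 0 < j₃)
    (h12 : j₁ ≠ j₂) (h13 : j₁ ≠ j₃) (h23 : j₂ ≠ j₃) :
    ∃ t₀ : ℝ,
      j₁ * j₂ * t₀ ^ 3 - (j₁ ^ 2 + j₂ ^ 2 + j₃ ^ 2) * t₀ ^ 2 + 4 * j₃ ^ 2 = 0 ∧
      j₂ / j₁ + j₁ / j₂ < t₀ ∧ 2 < t₀ ∧
      ∃ yp ym zp zm b1p b1m : ℝ,
        yp = (t₀ + Real.sqrt (t₀ ^ 2 - 4)) / 2 ∧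
        ym = (t₀ - Real.sqrt (t₀ ^ 2 - 4)) / 2 ∧
        zp = Real.sqrt (yp * (j₁ - j₂ * yp) / (j₂ - j₁ * yp)) ∧
        zm = Real.sqrt (ym * (j₁ - j₂ * ym) / (j₂ - j₁ * ym)) ∧
        b1p = cbrt (j₃ / (t₀ * yp * zp)) ∧
        b1m = cbrt (j₃ / (t₀ * ym * zm)) ∧
        {t : ℝ × ℝ × ℝ |
            t.1 * (t.2.1 ^ 2 + t.2.2 ^ 2) = j₁ ∧
            t.2.1 * (t.1 ^ 2 + t.2.2 ^ 2) = j₂ ∧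
            t.2.2 * (t.1 ^ 2 + t.2.1 ^ 2) = j₃} =
          {(b1p, yp * b1p, zp * b1p), (b1m, ym * b1m, zm * b1m)} ∧
        (b1p, yp * b1p, zp * b1p) ≠ (b1m, ym * b1m, zm * b1m) ∧
        yp * ym = 1 ∧ zp * zm = 1 ∧
        b1p * b1m = cbrt ((j₃ / t₀) ^ 2) ∧
        (yp * b1p) * (ym * b1m) = cbrt ((j₃ / t₀) ^ 2) ∧
        (zp * b1p) * (zm * b1m) = cbrt ((j₃ / t₀) ^ 2) := by
  have h1' : j₁ ≠ 0 := ne_of_gt h1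
  have h2' : j₂ ≠ 0 := ne_of_gt h2
  have h3' : j₃ ≠ 0 := ne_of_gt h3
  have h12s : 0 < (j₁ - j₂)^2 := pow_two_pos_of_ne_zero (sub_ne_zero.mpr h12)
  have hc2 : 2 < j₂ / j₁ + j₁ / j₂ := by
    rw [div_add_div _ _ h1' h2', lt_div_iff₀ (by positivity)]
    nlinarith
  have hc0 : 0 < j₂ / j₁ + j₁ / j₂ := by linarith
  have hcpoly : (j₂ / j₁ + j₁ / j₂) * (j₁ * j₂) = j₁^2 + j₂^2 := by field_simp; ring
  have hfc : j₁ * j₂ * (j₂ / j₁ + j₁ / j₂)^3 - (j₁^2 + j₂^2 + j₃^2) * (j₂ / j₁ + j₁ / j₂)^2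
      + 4 * j₃^2 < 0 := by
    have key : (j₁*j₂)^2 * (j₁ * j₂ * (j₂ / j₁ + j₁ / j₂)^3
        - (j₁^2 + j₂^2 + j₃^2) * (j₂ / j₁ + j₁ / j₂)^2 + 4 * j₃^2)
        = -(j₃^2 * ((j₁ - j₂)*(j₁ + j₂))^2) := by
      field_simp
      ring
    nlinarith [mul_pos (mul_pos h1 h2) (mul_pos h1 h2), sq_nonneg (j₁ + j₂),
      mul_pos (mul_pos h3 h3) (mul_pos h12s (pow_two_pos_of_ne_zero (ne_of_gt (show 0 < j₁ + j₂ by linarith))))]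
  -- existence of the root t₀
  obtain ⟨M, hMdef⟩ : ∃ M : ℝ, M = max (j₂ / j₁ + j₁ / j₂) ((j₁^2 + j₂^2 + j₃^2)/(j₁*j₂)) + 1 :=
    ⟨_, rfl⟩
  obtain ⟨t₀, ht₀mem, hft₀⟩ : ∃ t₀ ∈ Set.Ioo (j₂ / j₁ + j₁ / j₂) M,
      j₁ * j₂ * t₀^3 - (j₁^2 + j₂^2 + j₃^2) * t₀^2 + 4 * j₃^2 = 0 := by
    have hcM : j₂ / j₁ + j₁ / j₂ < M := by
      rw [hMdef]; exact lt_of_le_of_lt (le_max_left _ _) (lt_add_one _)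
    have hM0 : 0 < M := lt_trans hc0 hcM
    have hMS : j₁^2 + j₂^2 + j₃^2 < j₁ * j₂ * M := by
      have h := lt_of_le_of_lt (le_max_right (j₂ / j₁ + j₁ / j₂) ((j₁^2 + j₂^2 + j₃^2)/(j₁*j₂)))
        (lt_add_one _)
      rw [← hMdef, div_lt_iff₀ (mul_pos h1 h2)] at h
      nlinarith
    have hfM : 0 < j₁ * j₂ * M^3 - (j₁^2 + j₂^2 + j₃^2) * M^2 + 4 * j₃^2 := by
      nlinarith [mul_pos hM0 hM0, mul_pos h3 h3]
    have hcont : ContinuousOn (fun t : ℝ => j₁ * j₂ * t^3 - (j₁^2 + j₂^2 + j₃^2) * t^2 + 4 * j₃^2)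
        (Set.Icc (j₂ / j₁ + j₁ / j₂) M) := by fun_prop
    have hsub := intermediate_value_Ioo (le_of_lt hcM) hcont
    have h0mem : (0:ℝ) ∈ Set.Ioo
        (j₁ * j₂ * (j₂ / j₁ + j₁ / j₂)^3 - (j₁^2 + j₂^2 + j₃^2) * (j₂ / j₁ + j₁ / j₂)^2 + 4 * j₃^2)
        (j₁ * j₂ * M^3 - (j₁^2 + j₂^2 + j₃^2) * M^2 + 4 * j₃^2) := ⟨hfc, hfM⟩
    obtain ⟨t₀, htmem, hft⟩ := hsub h0mem
    exact ⟨t₀, htmem, hft⟩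
  have ht₀c : j₂ / j₁ + j₁ / j₂ < t₀ := ht₀mem.1
  have ht₀2 : 2 < t₀ := lt_trans hc2 ht₀c
  have ht₀0 : 0 < t₀ := by linarith
  have ht₀poly : j₁^2 + j₂^2 < j₁ * j₂ * t₀ := by
    have := mul_lt_mul_of_pos_right ht₀c (mul_pos h1 h2)
    rw [hcpoly] at this; nlinarith
  -- uniqueness of roots above c
  have huniq : ∀ u : ℝ, j₂ / j₁ + j₁ / j₂ < u →
      j₁ * j₂ * u^3 - (j₁^2 + j₂^2 + j₃^2) * u^2 + 4 * j₃^2 = 0 → u = t₀ := by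
    intro u hu hfu
    by_contra hne
    have hu0 : 0 < u := lt_trans hc0 hu
    have hupoly : j₁^2 + j₂^2 < j₁ * j₂ * u := by
      have := mul_lt_mul_of_pos_right hu (mul_pos h1 h2)
      rw [hcpoly] at this; nlinarith
    have hfac : (u - t₀) * (j₁*j₂*(u^2 + u*t₀ + t₀^2) - (j₁^2+j₂^2+j₃^2)*(u + t₀)) = 0 := by
      linear_combination hfu - hft₀
    have h2fac : j₁*j₂*(u^2 + u*t₀ + t₀^2) = (j₁^2+j₂^2+j₃^2)*(u + t₀) := by
      rcases mul_eq_zero.mp hfac with h | h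
      · exact absurd (sub_eq_zero.mp h) hne
      · linarith
    have h4 : 4*j₃^2*(u + t₀) = j₁*j₂*u^2*t₀^2 := by
      linear_combination (u + t₀)*hfu - u^2*h2fac
    have hsum : 0 < u + t₀ := by linarith
    have hP : ((j₁^2+j₂^2) - j₁*j₂*u)*((j₁^2+j₂^2) - j₁*j₂*t₀)
        *((j₁^2+j₂^2)*(u+t₀) + (j₁*j₂)*(u*t₀))
        = -((u+t₀)*(j₃^2*((j₁-j₂)*(j₁+j₂))^2)) := by
      linear_combination (-(j₁^2+j₂^2)^2)*h2fac - (j₁*j₂)^2*h4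
    have hf3 : 0 < (j₁^2+j₂^2)*(u+t₀) + (j₁*j₂)*(u*t₀) := by
      nlinarith [mul_pos (mul_pos h1 h2) (mul_pos hu0 ht₀0), mul_pos h1 h1, mul_pos h2 h2]
    have hL : 0 < ((j₁^2+j₂^2) - j₁*j₂*u)*((j₁^2+j₂^2) - j₁*j₂*t₀)
        *((j₁^2+j₂^2)*(u+t₀) + (j₁*j₂)*(u*t₀)) :=
      mul_pos (mul_pos_of_neg_of_neg (by linarith) (by linarith)) hf3
    rw [hP] at hL
    nlinarith [mul_pos hsum (mul_pos (mul_pos h3 h3)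
      (mul_pos h12s (pow_two_pos_of_ne_zero (ne_of_gt (show 0 < j₁ + j₂ by linarith)))))]
  -- square root s
  have hs4 : 0 < t₀^2 - 4 := by nlinarith
  obtain ⟨s, hsdef⟩ : ∃ s : ℝ, s = Real.sqrt (t₀^2 - 4) := ⟨_, rfl⟩
  have hs0 : 0 < s := hsdef ▸ Real.sqrt_pos.mpr hs4
  have hssq : s^2 = t₀^2 - 4 := hsdef ▸ Real.sq_sqrt hs4.le
  have hst : s < t₀ := by nlinarith
  obtain ⟨yp, hypdef⟩ : ∃ v : ℝ, v = (t₀ + s)/2 := ⟨_, rfl⟩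
  obtain ⟨ym, hymdef⟩ : ∃ v : ℝ, v = (t₀ - s)/2 := ⟨_, rfl⟩
  have hypm : yp * ym = 1 := by rw [hypdef, hymdef]; linear_combination (-1/4 : ℝ) * hssq
  have hsum : yp + ym = t₀ := by rw [hypdef, hymdef]; ring
  have hym0 : 0 < ym := by rw [hymdef]; linarith
  have hyp1 : 1 < yp := by rw [hypdef]; linarith
  have hyp0 : 0 < yp := by linarith
  have hym1 : ym < 1 := by nlinarith
  have hqp : yp^2 + 1 = t₀*yp := by rw [hypdef]; linear_combination (1/4 : ℝ) * hssq
  have hqm : ym^2 + 1 = t₀*ym := by rw [hymdef]; linear_combination (1/4 : ℝ) * hssq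
  -- master lemma
  have master : ∀ y z b : ℝ, 0 < y → y ≠ 1 → y^2 + 1 = t₀*y →
      z = Real.sqrt (y*(j₁ - j₂*y)/(j₂ - j₁*y)) → b = cbrt (j₃/(t₀*y*z)) →
      (j₂ - j₁*y ≠ 0) ∧ 0 < z ∧ z^2*(j₂ - j₁*y) = y*(j₁ - j₂*y) ∧ 0 < b ∧
      b^3*(t₀*y*z) = j₃ ∧
      b*((y*b)^2 + (z*b)^2) = j₁ ∧ (y*b)*(b^2 + (z*b)^2) = j₂ ∧ (z*b)*(b^2 + (y*b)^2) = j₃ := by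
    clear hfc hc2 hc0 hcpoly ht₀mem hMdef h12s hypm hsum hym0 hyp1 hyp0 hym1 hqp hqm hs0 hssq hst hsdef hs4 ht₀c ht₀2 ht₀poly h12 h13 h23
    intro y z b hy0 hy1 hquad hzdef hbdef
    have hy1sq : (1 - y^2) ≠ 0 := by
      intro h; apply hy1; nlinarith
    have hkey : (j₁ - j₂*y)*(j₂ - j₁*y)*(1+y^2)^2 = j₃^2*y*(1-y^2)^2 := by
      linear_combination y^3*hft₀ + (j₁*j₂*((t₀*y)^2+(t₀*y)*(y^2+1)+(y^2+1)^2)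
        - (j₁^2+j₂^2+j₃^2)*y*(t₀*y+y^2+1))*hquad
    have hND : 0 < (j₁ - j₂*y)*(j₂ - j₁*y) := by
      nlinarith [sq_nonneg (1+y^2), pow_two_pos_of_ne_zero hy1sq,
        mul_pos (mul_pos (mul_pos h3 h3) hy0) (pow_two_pos_of_ne_zero hy1sq)]
    have hD : j₂ - j₁*y ≠ 0 := by
      intro h; rw [h, mul_zero] at hND; exact lt_irrefl 0 hND
    have hDD : 0 < (j₂ - j₁*y)^2 := pow_two_pos_of_ne_zero hD
    have hD1y : 0 < (j₂ - j₁*y)*(1-y^2) := by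
      nlinarith [mul_pos (show (0:ℝ) < (j₁-j₂*y)*(j₂-j₁*y) + (j₂-j₁*y)^2 by nlinarith)
        (show (0:ℝ) < 1 + y by linarith)]
    have hzarg : 0 < y*(j₁ - j₂*y)/(j₂ - j₁*y) := by
      have heq : y*(j₁-j₂*y)/(j₂-j₁*y) = y*((j₁-j₂*y)*(j₂-j₁*y))/(j₂-j₁*y)^2 := by
        rw [div_eq_div_iff hD (pow_ne_zero 2 hD)]; ring
      rw [heq]; exact div_pos (mul_pos hy0 hND) hDD
    have hz0 : 0 < z := hzdef ▸ Real.sqrt_pos.mpr hzarg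
    have hzsq : z^2 = y*(j₁ - j₂*y)/(j₂ - j₁*y) := hzdef ▸ Real.sq_sqrt hzarg.le
    have hzsqD : z^2*(j₂ - j₁*y) = y*(j₁ - j₂*y) := by
      rw [hzsq]; exact div_mul_cancel₀ _ hD
    have hsqy : y*((t₀*(j₂-j₁*y)*z)^2) = y*((j₃*(1-y^2))^2) := by
      linear_combination (t₀^2*(j₂-j₁*y)*y)*hzsqD + hkey
        - (j₁-j₂*y)*(j₂-j₁*y)*(t₀*y+y^2+1)*hquad
    have hsq' : (t₀*(j₂-j₁*y)*z)^2 = (j₃*(1-y^2))^2 := mul_left_cancel₀ (ne_of_gt hy0) hsqy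
    have hsign : 0 < (t₀*(j₂-j₁*y)*z)*(j₃*(1-y^2)) := by
      nlinarith [mul_pos (mul_pos (mul_pos ht₀0 hz0) h3) hD1y]
    have hzrel : t₀*(j₂-j₁*y)*z = j₃*(1-y^2) := by
      have h0 : (t₀*(j₂-j₁*y)*z - j₃*(1-y^2))*(t₀*(j₂-j₁*y)*z + j₃*(1-y^2)) = 0 := by
        linear_combination hsq'
      rcases mul_eq_zero.mp h0 with h | h
      · exact sub_eq_zero.mp h
      · exfalso
        have : t₀*(j₂-j₁*y)*z = -(j₃*(1-y^2)) := by linarith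
        rw [this] at hsign
        nlinarith [sq_nonneg (j₃*(1-y^2))]
    have hbarg : 0 < j₃/(t₀*y*z) := div_pos h3 (mul_pos (mul_pos ht₀0 hy0) hz0)
    have hb0 : 0 < b := hbdef ▸ cbrt_pos' hbarg
    have hbc : b^3 = j₃/(t₀*y*z) := hbdef ▸ cbrt_cube hbarg.le
    have hbcube : b^3*(t₀*y*z) = j₃ := by
      rw [hbc]; field_simp
    have key1D : j₃*(y^2+z^2)*(j₂-j₁*y) = j₁*(t₀*y*z)*(j₂-j₁*y) := by
      linear_combination j₃*hzsqD - j₁*y*hzrel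
    have key1 : j₃*(y^2+z^2) = j₁*(t₀*y*z) := mul_right_cancel₀ hD key1D
    have key2D : j₃*(1+z^2)*(j₂-j₁*y) = j₂*(t₀*z)*(j₂-j₁*y) := by
      linear_combination j₃*hzsqD - j₂*hzrel
    have key2 : j₃*(1+z^2) = j₂*(t₀*z) := mul_right_cancel₀ hD key2D
    refine ⟨hD, hz0, hzsqD, hb0, hbcube, ?_, ?_, ?_⟩
    · apply mul_left_cancel₀ h3'
      linear_combination b^3*key1 + j₁*hbcube
    · apply mul_left_cancel₀ h3'
      linear_combination y*b^3*key2 + j₂*hbcube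
    · apply mul_left_cancel₀ h3'
      linear_combination j₃*z*b^3*hquad + j₃*hbcube
  -- instantiate
  obtain ⟨zp, hzpdef⟩ : ∃ v : ℝ, v = Real.sqrt (yp*(j₁ - j₂*yp)/(j₂ - j₁*yp)) := ⟨_, rfl⟩
  obtain ⟨zm, hzmdef⟩ : ∃ v : ℝ, v = Real.sqrt (ym*(j₁ - j₂*ym)/(j₂ - j₁*ym)) := ⟨_, rfl⟩
  obtain ⟨b1p, hb1pdef⟩ : ∃ v : ℝ, v = cbrt (j₃/(t₀*yp*zp)) := ⟨_, rfl⟩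
  obtain ⟨b1m, hb1mdef⟩ : ∃ v : ℝ, v = cbrt (j₃/(t₀*ym*zm)) := ⟨_, rfl⟩
  obtain ⟨hDp, hzp0, hzpD, hbp0, hbpc, hp1, hp2, hp3⟩ :=
    master yp zp b1p hyp0 (ne_of_gt hyp1) hqp hzpdef hb1pdef
  obtain ⟨hDm, hzm0, hzmD, hbm0, hbmc, hm1, hm2, hm3⟩ :=
    master ym zm b1m hym0 (ne_of_lt hym1) hqm hzmdef hb1mdef
  -- z product
  have hzz : zp * zm = 1 := by
    have hc1 : (zp*zm)^2*((j₂-j₁*yp)*(j₂-j₁*ym)) = 1*((j₂-j₁*yp)*(j₂-j₁*ym)) := by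
      linear_combination (zm^2*(j₂-j₁*ym))*hzpD + (yp*(j₁-j₂*yp))*hzmD
        + ((j₁-j₂*yp)*(j₁-j₂*ym) - j₁^2 + j₂^2)*hypm
    have hc2' : (zp*zm)^2 = 1^2 := by
      have := mul_right_cancel₀ (mul_ne_zero hDp hDm) hc1
      rw [this]; norm_num
    exact sq_inj (mul_pos hzp0 hzm0) one_pos hc2'
  -- b products
  have hbbarg : (0:ℝ) ≤ (j₃/t₀)^2 := sq_nonneg _
  have hbb0 : 0 < cbrt ((j₃/t₀)^2) := cbrt_pos' (pow_two_pos_of_ne_zero (div_ne_zero h3' (ne_of_gt ht₀0)))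
  have hbb : b1p * b1m = cbrt ((j₃/t₀)^2) := by
    apply cube_inj (mul_pos hbp0 hbm0) hbb0
    rw [cbrt_cube hbbarg]
    have h9 : (b1p*b1m)^3*t₀^2 = j₃^2 := by
      linear_combination (b1m^3*(t₀*ym*zm))*hbpc + j₃*hbmc
        - t₀^2*b1p^3*b1m^3*(zp*zm*hypm + hzz)
    have ht2 : t₀^2 ≠ 0 := pow_ne_zero 2 (ne_of_gt ht₀0)
    field_simp
    linear_combination h9
  have hbb2 : (yp*b1p) * (ym*b1m) = cbrt ((j₃/t₀)^2) := by
    have : (yp*b1p) * (ym*b1m) = (yp*ym)*(b1p*b1m) := by ring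
    rw [this, hypm, one_mul, hbb]
  have hbb3 : (zp*b1p) * (zm*b1m) = cbrt ((j₃/t₀)^2) := by
    have : (zp*b1p) * (zm*b1m) = (zp*zm)*(b1p*b1m) := by ring
    rw [this, hzz, one_mul, hbb]
  -- distinctness
  have hnePM : ((b1p, yp*b1p, zp*b1p) : ℝ × ℝ × ℝ) ≠ (b1m, ym*b1m, zm*b1m) := by
    intro h
    rw [Prod.mk.injEq, Prod.mk.injEq] at h
    obtain ⟨h1e, h2e, h3e⟩ := h
    rw [h1e] at h2e
    have hyy : yp = ym := mul_right_cancel₀ (ne_of_gt hbm0) h2e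
    rw [hypdef, hymdef] at hyy
    have : s = 0 := by linarith
    exact (ne_of_gt hs0) this
  -- the solution set
  have hset : {t : ℝ × ℝ × ℝ |
      t.1 * (t.2.1 ^ 2 + t.2.2 ^ 2) = j₁ ∧
      t.2.1 * (t.1 ^ 2 + t.2.2 ^ 2) = j₂ ∧
      t.2.2 * (t.1 ^ 2 + t.2.1 ^ 2) = j₃} =
      {(b1p, yp * b1p, zp * b1p), (b1m, ym * b1m, zm * b1m)} := by
    ext ⟨u, v, w⟩
    simp only [Set.mem_setOf_eq, Set.mem_insert_iff, Set.mem_singleton_iff, Prod.mk.injEq]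
    constructor
    · rintro ⟨e1, e2, e3⟩
      clear hfc hcpoly hc2 hc0 ht₀mem hMdef hp1 hp2 hp3 hm1 hm2 hm3 hnePM hbb hbb2 hbb3 hbb0 hbbarg hzz master hb1pdef hb1mdef h12s
      have hvw : 0 < v^2 + w^2 := by
        rcases eq_or_lt_of_le (by positivity : (0:ℝ) ≤ v^2 + w^2) with h | h
        · rw [← h, mul_zero] at e1; exact absurd e1 (ne_of_lt h1)
        · exact h
      have hu : 0 < u := pos_factor e1 hvw h1
      have hu' : u ≠ 0 := ne_of_gt hu
      have huw : 0 < u^2 + w^2 :=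
        add_pos_of_pos_of_nonneg (pow_two_pos_of_ne_zero hu') (sq_nonneg w)
      have hv : 0 < v := pos_factor e2 huw h2
      have huv : 0 < u^2 + v^2 :=
        add_pos_of_pos_of_nonneg (pow_two_pos_of_ne_zero hu') (sq_nonneg v)
      have hw : 0 < w := pos_factor e3 huv h3
      obtain ⟨y, hyv⟩ : ∃ y : ℝ, v = y*u := ⟨v/u, by field_simp⟩
      obtain ⟨z, hzw⟩ : ∃ z : ℝ, w = z*u := ⟨w/u, by field_simp⟩
      have hy0 : 0 < y := pos_factor hyv.symm hu hv
      have hz0 : 0 < z := pos_factor hzw.symm hu hw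
      subst hyv hzw
      have e1' : u^3*(y^2+z^2) = j₁ := by linear_combination e1
      have e2' : u^3*(y*(1+z^2)) = j₂ := by linear_combination e2
      have e3' : u^3*(z*(1+y^2)) = j₃ := by linear_combination e3
      have hcross : z^2*(j₂ - j₁*y) = y*(j₁ - j₂*y) := by
        linear_combination y*(1+z^2)*e1' - (y^2+z^2)*e2'
      have hcross23 : j₃*(y*(1+z^2)) = j₂*(z*(1+y^2)) := by
        linear_combination z*(1+y^2)*e2' - y*(1+z^2)*e3'
      have hD : j₂ - j₁*y ≠ 0 := by
        intro hB
        have hA : j₁ - j₂*y = 0 := by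
          have h0 : y*(j₁ - j₂*y) = 0 := by rw [← hcross, hB, mul_zero]
          rcases mul_eq_zero.mp h0 with h | h
          · exact absurd h (ne_of_gt hy0)
          · exact h
        have hy2 : j₁*(y^2 - 1) = 0 := by linear_combination (-1)*hA - y*hB
        have hy1 : y = 1 := by
          rcases mul_eq_zero.mp hy2 with h | h
          · exact absurd h h1'
          · have h0 : (y-1)*(y+1) = 0 := by linear_combination h
            rcases mul_eq_zero.mp h0 with h' | h'
            · linarith [sub_eq_zero.mp h']
            · linarith
        apply h12
        rw [hy1] at hA; linarith
      have hN : j₁ - j₂*y ≠ 0 := by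
        intro hA
        have h0 : z^2*(j₂-j₁*y) = 0 := by rw [hcross, hA, mul_zero]
        rcases mul_eq_zero.mp h0 with h | h
        · exact (pow_ne_zero 2 (ne_of_gt hz0)) h
        · exact hD h
      have h5 : j₂*(z*(1+y^2)*(j₂-j₁*y)) = j₂*(j₃*(y*(1-y^2))) := by
        linear_combination -(j₂-j₁*y)*hcross23 + j₃*y*hcross
      have hzrel2 : z*(1+y^2)*(j₂-j₁*y) = j₃*(y*(1-y^2)) := mul_left_cancel₀ h2' h5
      have h6 : y*((j₁-j₂*y)*(j₂-j₁*y)*(1+y^2)^2) = y*(j₃^2*y*(1-y^2)^2) := by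
        linear_combination (z*(1+y^2)*(j₂-j₁*y) + j₃*y*(1-y^2))*hzrel2
          - (1+y^2)^2*(j₂-j₁*y)*hcross
      have hkey2 : (j₁-j₂*y)*(j₂-j₁*y)*(1+y^2)^2 = j₃^2*y*(1-y^2)^2 :=
        mul_left_cancel₀ (ne_of_gt hy0) h6
      have hy1ne : (1 - y^2) ≠ 0 := by
        intro h
        have h0 : (j₁-j₂*y)*(j₂-j₁*y)*(1+y^2)^2 = 0 := by rw [hkey2, h]; ring
        have h1y : (1+y^2) ≠ 0 := by positivity
        rcases mul_eq_zero.mp h0 with h' | h'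
        · rcases mul_eq_zero.mp h' with h'' | h''
          · exact hN h''
          · exact hD h''
        · exact (pow_ne_zero 2 h1y) h'
      have hND2 : 0 < (j₁-j₂*y)*(j₂-j₁*y) := by
        have hrhs : 0 < j₃^2*y*(1-y^2)^2 :=
          mul_pos (mul_pos (pow_two_pos_of_ne_zero h3') hy0) (pow_two_pos_of_ne_zero hy1ne)
        rw [← hkey2] at hrhs
        rcases mul_pos_iff.mp hrhs with ⟨ha, _⟩ | ⟨_, hb⟩
        · exact ha
        · exfalso; linarith [sq_nonneg (1+y^2)]
      have hfT : j₁*j₂*((y^2+1)/y)^3 - (j₁^2+j₂^2+j₃^2)*((y^2+1)/y)^2 + 4*j₃^2 = 0 := by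
        have hy' : y ≠ 0 := ne_of_gt hy0
        have hfTmul : (j₁*j₂*((y^2+1)/y)^3 - (j₁^2+j₂^2+j₃^2)*((y^2+1)/y)^2 + 4*j₃^2) * y^3
            = (j₁-j₂*y)*(j₂-j₁*y)*(1+y^2)^2 - j₃^2*y*(1-y^2)^2 := by
          field_simp
          ring
        have h0 := hfTmul.trans (sub_eq_zero.mpr hkey2)
        rcases mul_eq_zero.mp h0 with h' | h'
        · exact h'
        · exact absurd h' (pow_ne_zero 3 hy')
      have hTc : j₂/j₁ + j₁/j₂ < (y^2+1)/y := by
        rw [div_add_div _ _ h1' h2', div_lt_div_iff₀ (by positivity) hy0]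
        linarith [hND2, sq_nonneg (j₁ - j₂*y), sq_nonneg (j₂ - j₁*y)]
      have hTt : (y^2+1)/y = t₀ := huniq _ hTc hfT
      have hyquad : y^2 + 1 = t₀*y := by
        rw [← hTt]; field_simp
      have hroot : (y - yp)*(y - ym) = 0 := by
        linear_combination hyquad - y*hsum + hypm
      rcases mul_eq_zero.mp hroot with hca | hca
      · have hyyp : y = yp := sub_eq_zero.mp hca
        rw [hyyp] at hcross e3'
        have hz2 : z^2 = zp^2 := mul_right_cancel₀ hDp (hcross.trans hzpD.symm)
        have hzzp : z = zp := sq_inj hz0 hzp0 hz2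
        rw [hzzp] at e3'
        have e3'' : u^3*(t₀*yp*zp) = j₃ := by linear_combination e3' - u^3*zp*hqp
        have hu3 : u^3 = b1p^3 :=
          mul_right_cancel₀ (ne_of_gt (mul_pos (mul_pos ht₀0 hyp0) hzp0)) (e3''.trans hbpc.symm)
        have hub : u = b1p := cube_inj hu hbp0 hu3
        exact Or.inl ⟨hub, by rw [hub, hyyp], by rw [hub, hzzp]⟩
      · have hyym : y = ym := sub_eq_zero.mp hca
        rw [hyym] at hcross e3'
        have hz2 : z^2 = zm^2 := mul_right_cancel₀ hDm (hcross.trans hzmD.symm)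
        have hzzm : z = zm := sq_inj hz0 hzm0 hz2
        rw [hzzm] at e3'
        have e3'' : u^3*(t₀*ym*zm) = j₃ := by linear_combination e3' - u^3*zm*hqm
        have hu3 : u^3 = b1m^3 :=
          mul_right_cancel₀ (ne_of_gt (mul_pos (mul_pos ht₀0 hym0) hzm0)) (e3''.trans hbmc.symm)
        have hub : u = b1m := cube_inj hu hbm0 hu3
        exact Or.inr ⟨hub, by rw [hub, hyym], by rw [hub, hzzm]⟩
    · rintro (⟨rfl, rfl, rfl⟩ | ⟨rfl, rfl, rfl⟩)
      · exact ⟨hp1, hp2, hp3⟩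
      · exact ⟨hm1, hm2, hm3⟩
  exact ⟨t₀, hft₀, ht₀c, ht₀2, yp, ym, zp, zm, b1p, b1m,
    by rw [hypdef, hsdef], by rw [hymdef, hsdef], hzpdef, hzmdef, hb1pdef, hb1mdef,
    hset, hnePM, hypm, hzz, hbb, hbb2, hbb3⟩
end
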